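/- Suppose W* ∈ ℝ^K satisfies W*(j) = (1/|S_j|) Σ_{s∈S_j} T_s(Ṽ(W*)) for a partition {S_j} of S, where Ṽ(W)(s) = W(j) for s ∈ S_j. Define e_j = max_{s₁,s₂∈S_j} |V*(s₁) - V*(s₂)| and let V* be the fixed point of T. Then ‖Ṽ(W*) - V*‖_∞ ≤ ‖e‖_∞/(1-γ). -/
import Mathlib

lemma inf'_abs_sub_le {α : Type*} (t : Finset α) (ht : t.Nonempty) (g1 g2 : α → ℝ)
    (c : ℝ) (h : ∀ a ∈ t, |g1 a - g2 a| ≤ c) :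
    |t.inf' ht g1 - t.inf' ht g2| ≤ c := by
  rw [abs_le]
  constructor
  · obtain ⟨a, ha, hEq⟩ := Finset.exists_mem_eq_inf' ht g1
    have h2 := Finset.inf'_le g2 ha
    have := (abs_le.mp (h a ha)).1
    linarith [hEq ▸ le_refl (t.inf' ht g1)]
  · obtain ⟨a, ha, hEq⟩ := Finset.exists_mem_eq_inf' ht g2
    have h1 := Finset.inf'_le g1 ha
    have := (abs_le.mp (h a ha)).2
    linarith


/-- Pre-specified aggregation error bound: if W* solves the aggregated fixed-point
equation, then ‖Ṽ(W*) - V*‖_∞ ≤ ‖e‖_∞ / (1-γ), where e_j is the oscillation of the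
optimal value V* within mega-state j. -/
theorem stmt_7 {S A : Type*} [Fintype S] [Nonempty S] [Fintype A] [Nonempty A]
    (P : S → A → S → ℝ) (r : S → A → ℝ) (γ : ℝ)
    (hγ0 : 0 ≤ γ) (hγ1 : γ < 1)
    (hP0 : ∀ s a s', 0 ≤ P s a s')
    (hP1 : ∀ s a, ∑ s', P s a s' = 1)
    (Ts : S → (S → ℝ) → ℝ)
    (hTs : ∀ s V, Ts s V = Finset.univ.inf' Finset.univ_nonempty
      (fun a => r s a + γ * ∑ s', P s a s' * V s'))
    (Vstar : S → ℝ) (hVstar : ∀ s, Vstar s = Ts s Vstar)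
    (K : ℕ) (f : S → Fin K)
    (hne : ∀ j : Fin K, (Finset.univ.filter fun s => f s = j).Nonempty)
    (Wstar : Fin K → ℝ)
    (hW : ∀ j : Fin K, Wstar j =
      (((Finset.univ.filter fun s => f s = j).card : ℝ))⁻¹ *
        ∑ s ∈ (Finset.univ.filter fun s => f s = j), Ts s (fun s' => Wstar (f s')))
    (e : Fin K → ℝ)
    (he : ∀ j : Fin K, e j =
      (((Finset.univ.filter fun s => f s = j) ×ˢ (Finset.univ.filter fun s => f s = j)).sup'
        ((hne j).product (hne j)) (fun p => |Vstar p.1 - Vstar p.2|))) :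
    Finset.univ.sup' Finset.univ_nonempty (fun s => |Wstar (f s) - Vstar s|)
      ≤ (Finset.univ.sup' (Finset.univ_nonempty_iff.mpr ⟨f (Classical.arbitrary S)⟩) e)
          / (1 - γ) := by
  set Vt : S → ℝ := fun s => Wstar (f s) with hVt
  set D : ℝ := Finset.univ.sup' Finset.univ_nonempty (fun s => |Wstar (f s) - Vstar s|) with hD
  set E : ℝ := Finset.univ.sup' (Finset.univ_nonempty_iff.mpr ⟨f (Classical.arbitrary S)⟩) e
    with hE
  have hDs : ∀ s : S, |Vt s - Vstar s| ≤ D := fun s =>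
    Finset.le_sup' (fun s => |Wstar (f s) - Vstar s|) (Finset.mem_univ s)
  -- contraction step
  have hcontr : ∀ s : S, |Ts s Vt - Vstar s| ≤ γ * D := by
    intro s
    rw [hVstar s, hTs s Vt, hTs s Vstar]
    apply inf'_abs_sub_le
    intro a _
    have heq : (r s a + γ * ∑ s', P s a s' * Vt s') - (r s a + γ * ∑ s', P s a s' * Vstar s')
        = γ * ∑ s', P s a s' * (Vt s' - Vstar s') := by
      rw [Finset.mul_sum, Finset.mul_sum, Finset.mul_sum, add_sub_add_left_eq_sub,
        ← Finset.sum_sub_distrib]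
      exact Finset.sum_congr rfl fun i _ => by ring
    rw [heq, abs_mul, abs_of_nonneg hγ0]
    apply mul_le_mul_of_nonneg_left _ hγ0
    calc |∑ s', P s a s' * (Vt s' - Vstar s')| ≤ ∑ s', |P s a s' * (Vt s' - Vstar s')| :=
          Finset.abs_sum_le_sum_abs _ _
      _ ≤ ∑ s', P s a s' * D := by
          apply Finset.sum_le_sum
          intro s' _
          rw [abs_mul, abs_of_nonneg (hP0 s a s')]
          exact mul_le_mul_of_nonneg_left (hDs s') (hP0 s a s')
      _ = D := by rw [← Finset.sum_mul, hP1, one_mul]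
  -- key per-state bound
  have key : ∀ s : S, |Wstar (f s) - Vstar s| ≤ E + γ * D := by
    intro s
    set j := f s with hj
    set T := Finset.univ.filter fun s' => f s' = j with hT
    have hsT : s ∈ T := by simp [hT, hj]
    have hcard : (0 : ℝ) < (T.card : ℝ) := by
      exact_mod_cast Finset.card_pos.mpr (hne j)
    have hVs : Vstar s = (T.card : ℝ)⁻¹ * ∑ _s' ∈ T, Vstar s := by
      rw [Finset.sum_const, nsmul_eq_mul, ← mul_assoc, inv_mul_cancel₀ (ne_of_gt hcard),
        one_mul]
    have hper : ∀ s' ∈ T, |Ts s' Vt - Vstar s| ≤ E + γ * D := by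
      intro s' hs'
      have h1 : |Ts s' Vt - Vstar s'| ≤ γ * D := hcontr s'
      have h2 : |Vstar s' - Vstar s| ≤ e j := by
        rw [he j]
        have hmem : (s', s) ∈ T ×ˢ T := Finset.mem_product.mpr ⟨hs', hsT⟩
        exact Finset.le_sup' (fun p => |Vstar p.1 - Vstar p.2|) hmem
      have h3 : e j ≤ E := Finset.le_sup' e (Finset.mem_univ j)
      calc |Ts s' Vt - Vstar s| ≤ |Ts s' Vt - Vstar s'| + |Vstar s' - Vstar s| := by
            simpa using abs_sub_le (Ts s' Vt) (Vstar s') (Vstar s)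
        _ ≤ γ * D + e j := add_le_add h1 h2
        _ ≤ E + γ * D := by linarith
    calc |Wstar j - Vstar s|
        = |(T.card : ℝ)⁻¹ * ∑ s' ∈ T, (Ts s' Vt - Vstar s)| := by
          rw [hW j, Finset.sum_sub_distrib, mul_sub, ← hVs]
      _ ≤ (T.card : ℝ)⁻¹ * ∑ s' ∈ T, |Ts s' Vt - Vstar s| := by
          rw [abs_mul, abs_of_nonneg (le_of_lt (inv_pos.mpr hcard))]
          exact mul_le_mul_of_nonneg_left (Finset.abs_sum_le_sum_abs _ _)
            (le_of_lt (inv_pos.mpr hcard))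
      _ ≤ (T.card : ℝ)⁻¹ * ∑ _s' ∈ T, (E + γ * D) := by
          exact mul_le_mul_of_nonneg_left (Finset.sum_le_sum hper)
            (le_of_lt (inv_pos.mpr hcard))
      _ = E + γ * D := by
          rw [Finset.sum_const, nsmul_eq_mul, ← mul_assoc, inv_mul_cancel₀ (ne_of_gt hcard),
            one_mul]
  have hDle : D ≤ E + γ * D := by
    rw [hD]
    exact Finset.sup'_le _ _ fun s _ => key s
  rw [le_div_iff₀ (by linarith : (0:ℝ) < 1 - γ)]
  linarith
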